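/- Let A ∈ ℝ^{n×d} satisfy (1/κ)I ⪯ AᵀA ⪯ κI for some κ ≥ 1, and ‖Aᵢ‖₂² ≤ C·d/n for every row i (some constant C > 0). Let b ∈ ℝⁿ, let x₀ = (AᵀA)⁻¹Aᵀb be the ℓ2 minimizer of x ↦ ‖Ax − b‖₂, let x* minimize x ↦ ‖Ax − b‖₁, and let x̃₀ ∈ ℝᵈ satisfy ‖x̃₀ − x₀‖₂ ≤ √(d/n)·‖Ax₀ − b‖₂. Then ‖x̃₀ − x*‖₂ ≤ (1 + κ√C)·√(d/n)·‖Ax* − b‖₁. -/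

import Mathlib

/-!
Since `x₀` solves the normal equations, `‖Ax₀ − b‖₂ ≤ ‖Ax − b‖₂ ≤ ‖Ax − b‖₁` for every `x`, and
`AᵀA (x − x₀) = Aᵀ(Ax − b) = ∑ᵢ (Ax − b)ᵢ Aᵢ` has norm at most `√(Cd/n) ‖Ax − b‖₁` by the row
bound. The lower Loewner bound `AᵀA ⪰ I/κ` turns this into `‖x − x₀‖₂ ≤ κ √(Cd/n) ‖Ax − b‖₁`,
and the triangle inequality through `x₀` finishes the proof for `x = x*`.
-/

open Matrix Finset

noncomputable def l1norm {m : ℕ} (v : Fin m → ℝ) : ℝ := ∑ i, |v i|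

noncomputable def l2norm {m : ℕ} (v : Fin m → ℝ) : ℝ := Real.sqrt (∑ i, (v i) ^ 2)

def loewnerLE {d : ℕ} (M N : Matrix (Fin d) (Fin d) ℝ) : Prop := (N - M).PosSemidef

section Norms

variable {m : ℕ}

lemma l2norm_eq_norm_toLp (v : Fin m → ℝ) : l2norm v = ‖WithLp.toLp 2 v‖ := by
  simp [l2norm, EuclideanSpace.norm_eq, sq_abs]

lemma l2norm_nonneg (v : Fin m → ℝ) : 0 ≤ l2norm v := Real.sqrt_nonneg _

lemma l2norm_eq_zero {v : Fin m → ℝ} : l2norm v = 0 ↔ v = 0 := by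
  simp [l2norm_eq_norm_toLp]

lemma l2norm_sq (v : Fin m → ℝ) : l2norm v ^ 2 = v ⬝ᵥ v := by
  rw [l2norm, Real.sq_sqrt (by positivity)]
  simp [dotProduct, sq]

lemma l2norm_sub_comm (u v : Fin m → ℝ) : l2norm (u - v) = l2norm (v - u) := by
  simp only [l2norm_eq_norm_toLp, WithLp.toLp_sub, norm_sub_rev]

lemma l2norm_sub_le_add (u v w : Fin m → ℝ) :
    l2norm (u - w) ≤ l2norm (u - v) + l2norm (v - w) := by
  simp only [l2norm_eq_norm_toLp, WithLp.toLp_sub]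
  exact norm_sub_le_norm_sub_add_norm_sub _ _ _

lemma dotProduct_le_l2norm_mul (u v : Fin m → ℝ) : u ⬝ᵥ v ≤ l2norm u * l2norm v := by
  simpa [l2norm_eq_norm_toLp, EuclideanSpace.inner_toLp_toLp, dotProduct_comm]
    using real_inner_le_norm (WithLp.toLp 2 u) (WithLp.toLp 2 v)

lemma l2norm_le_l1norm (v : Fin m → ℝ) : l2norm v ≤ l1norm v := by
  have hsq : ∑ i, v i ^ 2 ≤ (∑ i, |v i|) ^ 2 := by
    simpa [sq_abs] using sum_sq_le_sq_sum_of_nonneg (s := univ) fun i _ ↦ abs_nonneg (v i)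
  rw [l2norm, l1norm, Real.sqrt_le_left (by positivity)]
  exact hsq

end Norms

section Matrices

variable {n d : ℕ}

lemma l2norm_transpose_mulVec_le (A : Matrix (Fin n) (Fin d) ℝ) {R : ℝ}
    (hA : ∀ i, l2norm (A i) ≤ R) (r : Fin n → ℝ) : l2norm (Aᵀ *ᵥ r) ≤ R * l1norm r := by
  rw [mulVec_transpose, vecMul_eq_sum, l2norm_eq_norm_toLp, WithLp.toLp_sum, l1norm, mul_sum]
  refine (norm_sum_le _ _).trans (sum_le_sum fun i _ ↦ ?_)
  rw [WithLp.toLp_smul, norm_smul, Real.norm_eq_abs, mul_comm, ← l2norm_eq_norm_toLp]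
  exact mul_le_mul_of_nonneg_right (hA i) (abs_nonneg _)

lemma mul_l2norm_le_l2norm_mulVec_of_loewnerLE {M : Matrix (Fin d) (Fin d) ℝ} {c : ℝ}
    (hM : loewnerLE (c • 1) M) (v : Fin d → ℝ) : c * l2norm v ≤ l2norm (M *ᵥ v) := by
  have hquad : c * l2norm v ^ 2 ≤ v ⬝ᵥ (M *ᵥ v) := by
    have h := hM.dotProduct_mulVec_nonneg v
    simp only [sub_mulVec, smul_mulVec, one_mulVec, star_trivial, dotProduct_sub,
      dotProduct_smul, smul_eq_mul] at h
    rw [l2norm_sq]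
    linarith
  have hcs := dotProduct_le_l2norm_mul v (M *ᵥ v)
  rcases (l2norm_nonneg v).eq_or_lt with hv | hv
  · rw [← hv, mul_zero]
    exact l2norm_nonneg _
  · nlinarith

lemma isUnit_of_loewnerLE_smul_one {M : Matrix (Fin d) (Fin d) ℝ} {c : ℝ} (hc : 0 < c)
    (hM : loewnerLE (c • 1) M) : IsUnit M := by
  refine mulVec_injective_iff_isUnit.mp fun v w hvw ↦ ?_
  have h := mul_l2norm_le_l2norm_mulVec_of_loewnerLE hM (v - w)
  rw [mulVec_sub, hvw, sub_self, l2norm_eq_zero.mpr rfl] at h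
  have := l2norm_nonneg (v - w)
  exact sub_eq_zero.mp (l2norm_eq_zero.mp (by nlinarith))

lemma transpose_mulVec_mulVec_inv_sub_eq_zero {A : Matrix (Fin n) (Fin d) ℝ} (hA : IsUnit (Aᵀ * A))
    (b : Fin n → ℝ) : Aᵀ *ᵥ (A *ᵥ (((Aᵀ * A)⁻¹ * Aᵀ) *ᵥ b) - b) = 0 := by
  rw [mulVec_sub, mulVec_mulVec, mulVec_mulVec, ← Matrix.mul_assoc,
    Matrix.mul_nonsing_inv _ ((isUnit_iff_isUnit_det _).mp hA), Matrix.one_mul, sub_self]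

lemma l2norm_mulVec_sub_le_of_transpose_mulVec_eq_zero {A : Matrix (Fin n) (Fin d) ℝ}
    {b : Fin n → ℝ} {x₀ : Fin d → ℝ} (h : Aᵀ *ᵥ (A *ᵥ x₀ - b) = 0) (x : Fin d → ℝ) :
    l2norm (A *ᵥ x₀ - b) ≤ l2norm (A *ᵥ x - b) := by
  have hsplit : A *ᵥ x - b = A *ᵥ (x - x₀) + (A *ᵥ x₀ - b) := by
    rw [mulVec_sub]
    abel
  have horth : inner ℝ (WithLp.toLp 2 (A *ᵥ (x - x₀))) (WithLp.toLp 2 (A *ᵥ x₀ - b)) = 0 := by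
    rw [EuclideanSpace.inner_toLp_toLp, star_trivial, dotProduct_mulVec, ← mulVec_transpose, h,
      zero_dotProduct]
  have hpyth := norm_add_sq_eq_norm_sq_add_norm_sq_real horth
  rw [← WithLp.toLp_add, ← hsplit] at hpyth
  rw [l2norm_eq_norm_toLp, l2norm_eq_norm_toLp]
  refine (pow_le_pow_iff_left₀ (norm_nonneg _) (norm_nonneg _) two_ne_zero).mp ?_
  nlinarith [sq_nonneg ‖WithLp.toLp 2 (A *ᵥ (x - x₀))‖]

lemma gram_mulVec_sub_eq_of_transpose_mulVec_eq_zero {A : Matrix (Fin n) (Fin d) ℝ}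
    {b : Fin n → ℝ} {x₀ : Fin d → ℝ} (h : Aᵀ *ᵥ (A *ᵥ x₀ - b) = 0) (x : Fin d → ℝ) :
    (Aᵀ * A) *ᵥ (x - x₀) = Aᵀ *ᵥ (A *ᵥ x - b) := by
  rw [← mulVec_mulVec, ← sub_zero (Aᵀ *ᵥ (A *ᵥ x - b)), ← h, ← mulVec_sub, sub_sub_sub_cancel_right,
    mulVec_sub]

end Matrices

theorem stmt10_general {n d : ℕ} (A : Matrix (Fin n) (Fin d) ℝ) (b : Fin n → ℝ)
    (κ C : ℝ) (hκ : 1 ≤ κ)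
    (hlo : loewnerLE ((1 / κ) • (1 : Matrix (Fin d) (Fin d) ℝ)) (Aᵀ * A))
    (hrow : ∀ i, (l2norm (A i)) ^ 2 ≤ C * d / n)
    (x0 : Fin d → ℝ) (hx0 : x0 = ((Aᵀ * A)⁻¹ * Aᵀ).mulVec b)
    (xstar : Fin d → ℝ)
    (xt0 : Fin d → ℝ)
    (hxt0 : l2norm (xt0 - x0) ≤ Real.sqrt ((d : ℝ) / n) * l2norm (A.mulVec x0 - b)) :
    l2norm (xt0 - xstar)
      ≤ (1 + κ * Real.sqrt C) * Real.sqrt ((d : ℝ) / n) * l1norm (A.mulVec xstar - b) := by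
  have hκ₀ : 0 < κ := by linarith
  have hgram : IsUnit (Aᵀ * A) := isUnit_of_loewnerLE_smul_one (by positivity) hlo
  have hnormal : Aᵀ *ᵥ (A *ᵥ x0 - b) = 0 := hx0 ▸ transpose_mulVec_mulVec_inv_sub_eq_zero hgram b
  have hrow' : ∀ i, l2norm (A i) ≤ √C * √((d : ℝ) / n) := fun i ↦ by
    rw [← Real.sqrt_mul' _ (by positivity), ← mul_div_assoc]
    exact Real.le_sqrt_of_sq_le (hrow i)
  have hfit : l2norm (xt0 - x0) ≤ √((d : ℝ) / n) * l1norm (A *ᵥ xstar - b) :=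
    hxt0.trans <| mul_le_mul_of_nonneg_left
      ((l2norm_mulVec_sub_le_of_transpose_mulVec_eq_zero hnormal xstar).trans (l2norm_le_l1norm _))
      (Real.sqrt_nonneg _)
  have hgap : l2norm (x0 - xstar) ≤ κ * (√C * √((d : ℝ) / n) * l1norm (A *ᵥ xstar - b)) := by
    have h := mul_l2norm_le_l2norm_mulVec_of_loewnerLE hlo (xstar - x0)
    rw [gram_mulVec_sub_eq_of_transpose_mulVec_eq_zero hnormal, one_div_mul_eq_div,
      div_le_iff₀' hκ₀] at h
    rw [l2norm_sub_comm]
    exact h.trans (mul_le_mul_of_nonneg_left (l2norm_transpose_mulVec_le A hrow' _) hκ₀.le)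
  have htri := l2norm_sub_le_add xt0 x0 xstar
  linarith

/-- If `(1/κ)I ⪯ AᵀA ⪯ κI`, rows satisfy `‖Aᵢ‖₂² ≤ C·d/n`, `x₀ = (AᵀA)⁻¹Aᵀb` is the
ℓ2 minimizer, `x*` minimizes `‖Ax − b‖₁`, and `x̃₀` satisfies
`‖x̃₀ − x₀‖₂ ≤ √(d/n)·‖Ax₀ − b‖₂`, then
`‖x̃₀ − x*‖₂ ≤ (1 + κ√C)·√(d/n)·‖Ax* − b‖₁`. -/
theorem stmt10 {n d : ℕ} (A : Matrix (Fin n) (Fin d) ℝ) (b : Fin n → ℝ)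
    (κ C : ℝ) (hκ : 1 ≤ κ) (hC : 0 < C)
    (hlo : loewnerLE ((1 / κ) • (1 : Matrix (Fin d) (Fin d) ℝ)) (Aᵀ * A))
    (hhi : loewnerLE (Aᵀ * A) (κ • (1 : Matrix (Fin d) (Fin d) ℝ)))
    (hrow : ∀ i, (l2norm (A i)) ^ 2 ≤ C * d / n)
    (x0 : Fin d → ℝ) (hx0 : x0 = ((Aᵀ * A)⁻¹ * Aᵀ).mulVec b)
    (xstar : Fin d → ℝ)
    (hxstar : ∀ x : Fin d → ℝ, l1norm (A.mulVec xstar - b) ≤ l1norm (A.mulVec x - b))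
    (xt0 : Fin d → ℝ)
    (hxt0 : l2norm (xt0 - x0) ≤ Real.sqrt ((d : ℝ) / n) * l2norm (A.mulVec x0 - b)) :
    l2norm (xt0 - xstar)
      ≤ (1 + κ * Real.sqrt C) * Real.sqrt ((d : ℝ) / n) * l1norm (A.mulVec xstar - b) :=
  stmt10_general A b κ C hκ hlo hrow x0 hx0 xstar xt0 hxt0
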